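/- Let G=(V,E) be a locally finite graph and let v be a vertex of G. Then for every p ∈ [0,1) and all integers n ≥ m ≥ 0, P_p(R_v ≥ m and E_v ≤ n) ≤ exp[−(1/2)(1−p)^{4n/m} m], where R_v is the intrinsic radius of the cluster of v, i.e. the maximal graph distance within K_v from v to a vertex of K_v. -/

import Mathlib

open MeasureTheory Filter Set
open scoped ENNReal

namespace Percolation

variable {V : Type*}

/-- The graph spanned by the open edges of a configuration `ω : Sym2 V → Bool`. -/
def openGraph (G : SimpleGraph V) (ω : Sym2 V → Bool) : SimpleGraph V where
  Adj u w := G.Adj u w ∧ ω s(u, w) = true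
  symm := by
    constructor
    intro u w h
    exact ⟨h.1.symm, by rw [Sym2.eq_swap]; exact h.2⟩
  loopless := ⟨fun u h => G.loopless.1 u h.1⟩

/-- The open cluster of the vertex `v` in the configuration `ω`. -/
def cluster (G : SimpleGraph V) (ω : Sym2 V → Bool) (v : V) : Set V :=
  {u | (openGraph G ω).Reachable v u}

/-- The set `E(S)` of edges of `G` with at least one endpoint in `S`. -/
def touchingEdges (G : SimpleGraph V) (S : Set V) : Set (Sym2 V) :=
  {e | e ∈ G.edgeSet ∧ ∃ u ∈ S, u ∈ e}

/-- The set `E(K_v)` of edges of `G` with at least one endpoint in the cluster of `v`. -/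
def clusterEdges (G : SimpleGraph V) (ω : Sym2 V → Bool) (v : V) : Set (Sym2 V) :=
  touchingEdges G (cluster G ω v)

/-- `μ` is the law of Bernoulli-`p` bond percolation on `G`: it is a probability measure on
configurations under which the states of the edges of `G` are independent, each edge being
open with probability `p`.  (This characterizes `μ` on all events depending only on the states
of the edges of `G`.) -/
def IsBernoulli (G : SimpleGraph V) (p : ℝ) (μ : Measure (Sym2 V → Bool)) : Prop :=
  IsProbabilityMeasure μ ∧
    ∀ s : Finset (Sym2 V), ↑s ⊆ G.edgeSet → ∀ f : Sym2 V → Bool,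
      μ {ω | ∀ e ∈ s, ω e = f e} =
        ENNReal.ofReal (p ^ (s.filter fun e => f e = true).card *
          (1 - p) ^ (s.filter fun e => f e = false).card)

/-- The critical probability of `G`. -/
noncomputable def pc (G : SimpleGraph V) : ℝ :=
  sInf {p : ℝ | 0 ≤ p ∧ p ≤ 1 ∧
    ∀ μ : Measure (Sym2 V → Bool), IsBernoulli G p μ →
      μ {ω | ∃ u : V, (cluster G ω u).Infinite} = 1}

/-- `ζ(p) = -limsup (1/n) log P_p(n ≤ E_v < ∞)`, where `μ` is Bernoulli-`p` percolation. -/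
noncomputable def zeta (G : SimpleGraph V) (v : V) (μ : Measure (Sym2 V → Bool)) : ℝ :=
  - Filter.limsup (fun n : ℕ =>
      Real.log (μ {ω | (n : ℕ∞) ≤ (clusterEdges G ω v).encard ∧
        (clusterEdges G ω v).encard < ⊤}).toReal / (n : ℝ)) Filter.atTop

/-- A graph is (vertex-)transitive if its automorphism group acts transitively. -/
def IsTransitive (G : SimpleGraph V) : Prop :=
  ∀ u w : V, ∃ φ : G ≃g G, φ u = w

/-- A graph is quasi-transitive if its automorphism group has finitely many vertex orbits. -/
def IsQuasiTransitive (G : SimpleGraph V) : Prop :=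
  ∃ S : Finset V, ∀ u : V, ∃ φ : G ≃g G, φ u ∈ S

/-- The volume `∑_{u ∈ K} deg(u)` of a set of vertices. -/
noncomputable def vol (G : SimpleGraph V) (K : Set V) : ℝ :=
  ∑ᶠ u ∈ K, ((G.neighborSet u).ncard : ℝ)

/-- The edge boundary `∂_E K`: edges with exactly one endpoint in `K`. -/
def edgeBoundary (G : SimpleGraph V) (K : Set V) : Set (Sym2 V) :=
  {e | e ∈ G.edgeSet ∧ ∃ u w : V, e = s(u, w) ∧ u ∈ K ∧ w ∉ K}

/-- The Cheeger constant `Φ_E(G)`. -/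
noncomputable def cheeger (G : SimpleGraph V) : ℝ :=
  sInf {r : ℝ | ∃ K : Set V, K.Finite ∧ K.Nonempty ∧
    r = ((edgeBoundary G K).ncard : ℝ) / vol G K}

/-- A graph is nonamenable if its Cheeger constant is positive. -/
def Nonamenable (G : SimpleGraph V) : Prop := 0 < cheeger G

/-- The anchored Cheeger constant `Φ*_E` of (the component of `v` in) `H`, anchored at `v`. -/
noncomputable def anchoredCheeger (H : SimpleGraph V) (v : V) : ℝ :=
  ⨆ n : ℕ, sInf {r : ℝ | ∃ K : Set V, v ∈ K ∧ K.Finite ∧ n ≤ K.ncard ∧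
    (SimpleGraph.induce K H).Connected ∧
    r = ((edgeBoundary H K).ncard : ℝ) / vol H K}

/-- The cluster of `v`, viewed as a subgraph of `G`. -/
def clusterSubgraph (G : SimpleGraph V) (ω : Sym2 V → Bool) (v : V) : G.Subgraph where
  verts := cluster G ω v
  Adj u w := (openGraph G ω).Adj u w ∧ u ∈ cluster G ω v ∧ w ∈ cluster G ω v
  adj_sub h := h.1.1
  edge_vert h := h.2.1
  symm := ⟨fun u w h => ⟨h.1.symm, h.2.2, h.2.1⟩⟩

/-- Membership in `𝓗_v`: finite connected subgraphs of `G` containing `v`. -/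
def HSetMem (G : SimpleGraph V) (v : V) (H : G.Subgraph) : Prop :=
  v ∈ H.verts ∧ H.verts.Finite ∧ H.Connected

/-- `F : 𝓗_v → ℂ` has subexponential growth:
`limsup (1/n) log sup {|F(H)| : H ∈ 𝓗_v, |E(H)| ≤ n} ≤ 0`. -/
def SubexpGrowth (G : SimpleGraph V) (v : V) (F : G.Subgraph → ℂ) : Prop :=
  Filter.limsup (fun n : ℕ =>
    Real.log (sSup {r : ℝ | ∃ H : G.Subgraph, HSetMem G v H ∧
      (touchingEdges G H.verts).ncard ≤ n ∧ r = ‖F H‖}) / (n : ℝ))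
    Filter.atTop ≤ 0

-- The configuration `ω` with the edge `e` opened, i.e. `ω^e`.
open Classical in
noncomputable def updOpen (ω : Sym2 V → Bool) (e : Sym2 V) : Sym2 V → Bool :=
  fun e' => if e' = e then true else ω e'

/-- The fluctuation `h_p(K_v) = p|∂K_v| - (1-p)|E_o(K_v)|` of the cluster of `v`. -/
noncomputable def fluct (G : SimpleGraph V) (p : ℝ) (ω : Sym2 V → Bool) (v : V) : ℝ :=
  p * ({e | e ∈ clusterEdges G ω v ∧ ω e = false}.ncard : ℝ) -
    (1 - p) * ({e | e ∈ clusterEdges G ω v ∧ ω e = true}.ncard : ℝ)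

/-- `Piv(H,v,W)`: edges of `H` whose deletion disconnects `v` from some vertex of `W`. -/
def Piv (H : SimpleGraph V) (v : V) (W : Set V) : Set (Sym2 V) :=
  {e | e ∈ H.edgeSet ∧ ∃ w ∈ W, ¬ (H.deleteEdges {e}).Reachable v w}

/-- `Br_k(K_v, v) = max {|Piv(K_v,v,W)| : W ⊆ K_v, |W| ≤ k}`. -/
noncomputable def Br (G : SimpleGraph V) (ω : Sym2 V → Bool) (v : V) (k : ℕ) : ℕ :=
  sSup {m : ℕ | ∃ W : Finset V, ↑W ⊆ cluster G ω v ∧ W.card ≤ k ∧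
    m = (Piv (openGraph G ω) v ↑W).ncard}

/-- `𝒫_ω(S → ∞)`: the minimal number of edges whose removal disconnects `S` from infinity
in the open subgraph of `ω`. -/
noncomputable def minCut (G : SimpleGraph V) (ω : Sym2 V → Bool) (S : Set V) : ℕ∞ :=
  ⨅ C ∈ {C : Set (Sym2 V) |
    ∀ s ∈ S, {u | ((openGraph G ω).deleteEdges C).Reachable s u}.Finite}, C.encard

/-- `v` is a furcation of `ω`: closing all edges incident to `v` splits the cluster of `v`
into at least three distinct infinite connected components. -/
def IsFurcation (G : SimpleGraph V) (ω : Sym2 V → Bool) (v : V) : Prop :=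
  ∃ u1 u2 u3 : V,
    (openGraph G ω).Adj v u1 ∧ (openGraph G ω).Adj v u2 ∧ (openGraph G ω).Adj v u3 ∧
    ¬ ((openGraph G ω).deleteEdges {e | v ∈ e}).Reachable u1 u2 ∧
    ¬ ((openGraph G ω).deleteEdges {e | v ∈ e}).Reachable u1 u3 ∧
    ¬ ((openGraph G ω).deleteEdges {e | v ∈ e}).Reachable u2 u3 ∧
    {x | ((openGraph G ω).deleteEdges {e | v ∈ e}).Reachable u1 x}.Infinite ∧
    {x | ((openGraph G ω).deleteEdges {e | v ∈ e}).Reachable u2 x}.Infinite ∧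
    {x | ((openGraph G ω).deleteEdges {e | v ∈ e}).Reachable u3 x}.Infinite

-- The `n`-step transition probability of simple random walk on the graph `H`.
open Classical in
noncomputable def walkProb (H : SimpleGraph V) : ℕ → V → V → ℝ
  | 0, u, w => if u = w then 1 else 0
  | n + 1, u, w => ∑ᶠ x ∈ H.neighborSet u, walkProb H n x w / ((H.neighborSet u).ncard : ℝ)

/-- Two vertices are `2`-connected in `H` if they are joined by two edge-disjoint paths. -/
def TwoConn (H : SimpleGraph V) (u w : V) : Prop :=
  ∃ p1 p2 : H.Walk u w, p1.IsPath ∧ p2.IsPath ∧ ∀ e ∈ p1.edges, e ∉ p2.edges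

/-- An edge of `H` is a bridge if deleting it disconnects its endpoints. -/
def IsBridgeOf (H : SimpleGraph V) (e : Sym2 V) : Prop :=
  e ∈ H.edgeSet ∧ ∃ u w : V, e = s(u, w) ∧ ¬ (H.deleteEdges {e}).Reachable u w

/-- `w` represents a leaf of the tree `Tr(K_v)` of `2`-connected components of the cluster of
`v`: it lies in the cluster, its `2`-connected component differs from that of `v`, and exactly
one bridge is incident to its `2`-connected component. -/
def IsTrLeaf (G : SimpleGraph V) (ω : Sym2 V → Bool) (v w : V) : Prop :=
  w ∈ cluster G ω v ∧ ¬ TwoConn (openGraph G ω) v w ∧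
    {e : Sym2 V | IsBridgeOf (openGraph G ω) e ∧
      ∃ x ∈ e, TwoConn (openGraph G ω) x w}.encard = 1

/-- `Lf_k(K_v, v)`: the maximum number of edges in a subgraph of `Tr(K_v)` spanned by the
union of the geodesics between the `2`-connected component of `v` and exactly `k` leaves
(`0` if `Tr(K_v)` has fewer than `k` leaves).  The tree edges of such a spanned subgraph are
exactly the bridges separating `v` from one of the chosen leaf representatives. -/
noncomputable def Lf (G : SimpleGraph V) (ω : Sym2 V → Bool) (v : V) (k : ℕ) : ℕ :=
  sSup {m : ℕ | ∃ w : Fin k → V, (∀ i, IsTrLeaf G ω v (w i)) ∧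
    (∀ i j : Fin k, i ≠ j → ¬ TwoConn (openGraph G ω) (w i) (w j)) ∧
    m = (⋃ i, Piv (openGraph G ω) v {w i}).ncard}

/-- `Q_k(p,n,m)`: the supremum over all countable locally finite graphs `G` and vertices `v`
of `P_p(Lf_k(K_v,v) = m and E_v = n)`. -/
noncomputable def Qk (k : ℕ) (p : ℝ) (n m : ℕ) : ℝ :=
  sSup {r : ℝ | ∃ (W : Type) (_ : Countable W) (G : SimpleGraph W) (v : W),
    (∀ u : W, (G.neighborSet u).Finite) ∧
    ∃ μ : Measure (Sym2 W → Bool), IsBernoulli G p μ ∧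
      r = (μ {ω | Lf G ω v k = m ∧ (clusterEdges G ω v).encard = (n : ℕ∞)}).toReal}

/-- `α(p) = sup {α ∈ [0,p] : α^{-α} (1-α)^{-(1-α)} (p/(1-p))^α < e^{ζ(p)}}`. -/
noncomputable def alphaP (G : SimpleGraph V) (v : V) (p : ℝ)
    (μ : Measure (Sym2 V → Bool)) : ℝ :=
  sSup {α : ℝ | 0 ≤ α ∧ α ≤ p ∧
    α ^ (-α) * (1 - α) ^ (-(1 - α)) * (p / (1 - p)) ^ α < Real.exp (zeta G v μ)}

/-!
Explore the cluster of `v` ball by ball in its intrinsic metric. The edges of `G` leading from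
the sphere of radius `j` out of the ball of radius `j + 1` (the escape edges at level `j`) are
pairwise disjoint subsets of `E(K_v)`, and none of them is examined while the balls of radius
`≤ j` are explored. If `R_v ≥ m`, an escape edge is open at every level `j < m`. With
`K = ⌊4n/m⌋`, on `{E_v ≤ n}` at most `n/(K+1) < m/4` levels carry more than `K` escape edges, so
at least `m/2` levels are thin. Given the exploration so far, a thin level is crossed with
probability at most `1 - (1-p)^K`, whence the bound `(1 - (1-p)^K)^{m/2} ≤ exp(-(1-p)^{4n/m} m/2)`.
-/

end Percolation

theorem Finset.card_sub_div_le_card_filter_le {ι : Type*} (s : Finset ι) (f : ι → ℕ) {n : ℕ}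
    (h : ∑ i ∈ s, f i ≤ n) (K : ℕ) : s.card - n / (K + 1) ≤ (s.filter (f · ≤ K)).card := by
  have hbig : (s.filter (¬ f · ≤ K)).card * (K + 1) ≤ n :=
    calc (s.filter (¬ f · ≤ K)).card * (K + 1)
        ≤ ∑ i ∈ s.filter (¬ f · ≤ K), f i := by
          rw [← smul_eq_mul]
          exact Finset.card_nsmul_le_sum _ _ _ fun i hi => by
            have := (Finset.mem_filter.mp hi).2; omega
      _ ≤ ∑ i ∈ s, f i := Finset.sum_le_sum_of_subset (Finset.filter_subset _ _)
      _ ≤ n := h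
  have hdiv := (Nat.le_div_iff_mul_le (by omega : 0 < K + 1)).mpr hbig
  rw [← s.card_filter_add_card_filter_not (f · ≤ K)]
  omega

theorem Nat.le_two_mul_sub_div (n m : ℕ) : m ≤ 2 * (m - n / (4 * n / m + 1)) := by
  rcases Nat.eq_zero_or_pos m with rfl | hm
  · simp
  set K := 4 * n / m
  have hK : 4 * n < m * (K + 1) := Nat.lt_mul_div_succ (4 * n) hm
  have hdiv : n / (K + 1) * (K + 1) ≤ n := Nat.div_mul_le_self n (K + 1)
  have : 4 * (n / (K + 1)) < m := Nat.lt_of_mul_lt_mul_right (a := K + 1) (by nlinarith)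
  omega

theorem Real.one_sub_pow_le_exp_neg_mul {x : ℝ} (hx : x ≤ 1) (r : ℕ) :
    (1 - x) ^ r ≤ Real.exp (-x * r) :=
  calc (1 - x) ^ r ≤ Real.exp (-x) ^ r :=
        pow_le_pow_left₀ (by linarith) (Real.one_sub_le_exp_neg x) r
    _ = Real.exp (-x * r) := by rw [← Real.exp_nat_mul]; ring_nf

namespace SimpleGraph

variable {V : Type*} {H : SimpleGraph V} {c u : V} {k : ℕ}

theorem mem_ball_succ_iff :
    u ∈ H.ball c (k + 1) ↔ u = c ∨ ∃ w ∈ H.ball c k, H.Adj w u := by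
  constructor
  · intro hu
    by_cases huc : u = c
    · exact Or.inl huc
    right
    have hne : H.edist c u ≠ ⊤ := by rw [edist_comm]; exact (hu.trans_le le_top).ne
    obtain ⟨p, hp⟩ := (reachable_of_edist_ne_top hne).exists_walk_length_eq_edist
    have hnil : ¬ p.Nil := fun h => huc h.eq.symm
    refine ⟨p.penultimate, ?_, p.adj_penultimate hnil⟩
    have hlen := p.length_dropLast_add_one hnil
    have hle : H.edist p.penultimate c ≤ p.dropLast.length := by
      rw [edist_comm]; exact edist_le _
    rw [mem_ball, edist_comm, ← hp] at hu
    rw [mem_ball]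
    refine hle.trans_lt ?_
    have : (p.length : ℕ∞) < k + 1 := hu
    norm_cast at this ⊢
    omega
  · rintro (rfl | ⟨w, hw, hwu⟩)
    · simp [mem_ball]
    · rw [mem_ball] at hw ⊢
      calc H.edist u c ≤ H.edist u w + H.edist w c := H.edist_triangle
        _ = H.edist w c + 1 := by rw [edist_comm, edist_eq_one_iff_adj.mpr hwu, add_comm]
        _ < k + 1 := (ENat.lt_add_one_iff (ENat.natCast_ne_top k)).mpr
          ((ENat.add_one_le_iff hw.ne_top).mpr hw)

theorem Reachable.exists_adj_boundary_ball (hr : H.Reachable c u) (hu : u ∉ H.ball c (k + 1)) :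
    ∃ x y, H.Adj x y ∧ x ∈ H.ball c (k + 1) \ H.ball c k ∧ y ∉ H.ball c (k + 1) := by
  obtain ⟨p⟩ := hr
  obtain ⟨d, -, hd, hd'⟩ := p.exists_boundary_dart _ (mem_ball_self (by simp)) hu
  refine ⟨d.fst, d.snd, d.adj, ⟨hd, fun h => hd' ?_⟩, hd'⟩
  exact mem_ball_succ_iff.mpr (Or.inr ⟨_, h, d.adj⟩)

end SimpleGraph

open scoped Function

namespace Percolation

variable {V : Type*} {G : SimpleGraph V} {p : ℝ} {μ : Measure (Sym2 V → Bool)}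

def cyl {ι : Type*} (t : Set ι) (ω : ι → Bool) : Set (ι → Bool) :=
  {ω' | ∀ e ∈ t, ω' e = ω e}

theorem measurableSet_cyl {ι : Type*} {t : Set ι} (ht : t.Finite) (ω : ι → Bool) :
    MeasurableSet (cyl t ω) := by
  have : cyl t ω = ⋂ e ∈ t, (fun ω' : ι → Bool => ω' e) ⁻¹' {ω e} := by
    ext; simp [cyl]
  rw [this]
  exact ht.measurableSet_biInter fun e _ => measurable_pi_apply e (measurableSet_singleton _)

theorem measure_inter_le_mul_of_cyl {ι : Type*} {μ : Measure (ι → Bool)} {t : Set ι}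
    (ht : t.Finite) {A B : Set (ι → Bool)} {c : ℝ≥0∞} (hA : ∀ ω ∈ A, cyl t ω ⊆ A)
    (hB : ∀ ω ∈ A, μ (cyl t ω ∩ B) ≤ μ (cyl t ω) * c) : μ (A ∩ B) ≤ μ A * c := by
  have := ht.to_subtype
  let π : (ι → Bool) → (t → Bool) := fun ω e => ω e
  have hfiber : ∀ ω, π ⁻¹' {π ω} = cyl t ω := by
    intro ω; ext ω'; simp [π, cyl, funext_iff]
  have hpiece : ∀ χ, μ (π ⁻¹' {χ} ∩ A ∩ B) ≤ μ (π ⁻¹' {χ} ∩ A) * c := by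
    intro χ
    rcases (π ⁻¹' {χ} ∩ A).eq_empty_or_nonempty with h | ⟨ω, hωχ, hωA⟩
    · simp [h]
    · have hχ : π ⁻¹' {χ} ∩ A = cyl t ω := by
        rw [← (Set.mem_singleton_iff.mp hωχ), hfiber]
        exact Set.inter_eq_left.mpr (hA ω hωA)
      rw [hχ]
      exact hB ω hωA
  have hmeas : ∀ χ, MeasurableSet (π ⁻¹' {χ} ∩ A) := by
    intro χ
    rcases (π ⁻¹' {χ} ∩ A).eq_empty_or_nonempty with h | ⟨ω, hωχ, hωA⟩
    · simp [h]
    · rw [← (Set.mem_singleton_iff.mp hωχ), hfiber, Set.inter_eq_left.mpr (hA ω hωA)]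
      exact measurableSet_cyl ht ω
  have hdisj : Pairwise (Disjoint on fun χ => π ⁻¹' {χ} ∩ A) := fun χ χ' h =>
    ((Set.disjoint_singleton.mpr h).preimage π).mono Set.inter_subset_left Set.inter_subset_left
  calc μ (A ∩ B) = μ (⋃ χ, π ⁻¹' {χ} ∩ A ∩ B) := by congr 1; ext; simp
    _ ≤ ∑' χ, μ (π ⁻¹' {χ} ∩ A ∩ B) := measure_iUnion_le _
    _ ≤ ∑' χ, μ (π ⁻¹' {χ} ∩ A) * c := ENNReal.tsum_le_tsum hpiece
    _ = μ A * c := by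
      rw [ENNReal.tsum_mul_right, ← measure_iUnion hdisj hmeas]
      congr 2; ext; simp

theorem IsBernoulli.measure_cyl_inter_closed (hμ : IsBernoulli G p μ) (hp0 : 0 ≤ p)
    (hp1 : p ≤ 1) {s S : Finset (Sym2 V)} (hsG : ↑s ⊆ G.edgeSet) (hSG : ↑S ⊆ G.edgeSet)
    (hd : Disjoint s S) (σ : Sym2 V → Bool) :
    μ (cyl s σ ∩ cyl S fun _ => false) = μ (cyl s σ) * ENNReal.ofReal ((1 - p) ^ S.card) := by
  classical
  set f : Sym2 V → Bool := fun e => if e ∈ S then false else σ e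
  have hs : ∀ e ∈ s, e ∉ S := fun e he => Finset.disjoint_left.mp hd he
  have hcyl : (cyl s σ ∩ cyl S fun _ => false) = {ω | ∀ e ∈ s ∪ S, ω e = f e} := by
    ext ω
    simp only [cyl, Set.mem_inter_iff, Set.mem_ofPred_eq, Finset.mem_coe, Finset.mem_union, f]
    constructor
    · rintro ⟨h1, h2⟩ e (he | he)
      · rw [if_neg (hs e he)]; exact h1 e he
      · rw [if_pos he]; exact h2 e he
    · intro h
      exact ⟨fun e he => by simpa [hs e he] using h e (Or.inl he),
        fun e he => by simpa [he] using h e (Or.inr he)⟩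
  have hS : ∀ e ∈ S, e ∉ s := fun e he hes => hs e hes he
  have htrue : (s ∪ S).filter (f · = true) = s.filter (σ · = true) := by
    ext e; by_cases he : e ∈ S <;> simp [f, he, hS e]
  have hfalse : (s ∪ S).filter (f · = false) = s.filter (σ · = false) ∪ S := by
    ext e; by_cases he : e ∈ S <;> simp [f, he, hS e]
  have hcard : (s.filter (σ · = false) ∪ S).card = (s.filter (σ · = false)).card + S.card :=
    Finset.card_union_of_disjoint (Finset.disjoint_of_subset_left (Finset.filter_subset _ _) hd)
  have hunion : ↑(s ∪ S) ⊆ G.edgeSet := by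
    rw [Finset.coe_union]; exact Set.union_subset hsG hSG
  rw [hcyl, hμ.2 _ hunion f, htrue, hfalse, hcard, pow_add, ← mul_assoc,
    ENNReal.ofReal_mul (by positivity)]
  congr 1
  exact (hμ.2 s hsG σ).symm

theorem IsBernoulli.measure_cyl_inter_exists_open (hμ : IsBernoulli G p μ) (hp0 : 0 ≤ p)
    (hp1 : p ≤ 1) {s S : Set (Sym2 V)} (hs : s.Finite) (hS : S.Finite) (hsG : s ⊆ G.edgeSet)
    (hSG : S ⊆ G.edgeSet) (hd : Disjoint s S) (σ : Sym2 V → Bool) :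
    μ (cyl s σ ∩ {ω | ∃ e ∈ S, ω e = true}) =
      μ (cyl s σ) * ENNReal.ofReal (1 - (1 - p) ^ S.ncard) := by
  have : IsProbabilityMeasure μ := hμ.1
  lift s to Finset (Sym2 V) using hs
  lift S to Finset (Sym2 V) using hS
  have hsplit := measure_inter_add_sdiff (μ := μ) (cyl s σ)
    (measurableSet_cyl S.finite_toSet fun _ => false)
  have hdiff : cyl (↑s) σ \ (cyl ↑S fun _ => false) =
      cyl s σ ∩ {ω | ∃ e ∈ (S : Set (Sym2 V)), ω e = true} := by
    ext ω; simp [cyl]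
  rw [hμ.measure_cyl_inter_closed hp0 hp1 hsG hSG (Finset.disjoint_coe.mp hd), hdiff] at hsplit
  have hy0 : 0 ≤ (1 - p) ^ S.card := pow_nonneg (by linarith) _
  have hy1 : (1 - p) ^ S.card ≤ 1 := pow_le_one₀ (by linarith) (by linarith)
  rw [Set.ncard_coe_finset]
  refine (ENNReal.add_right_inj (a := μ (cyl s σ) * ENNReal.ofReal ((1 - p) ^ S.card))
    (ENNReal.mul_ne_top (measure_ne_top μ _) ENNReal.ofReal_ne_top)).mp ?_
  rw [hsplit, ← mul_add, ← ENNReal.ofReal_add hy0 (by linarith), add_sub_cancel,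
    ENNReal.ofReal_one, mul_one]

def escapeEdges (G : SimpleGraph V) (ω : Sym2 V → Bool) (v : V) (k : ℕ) : Set (Sym2 V) :=
  {e ∈ G.edgeSet | ∃ x y, e = s(x, y) ∧
    x ∈ (openGraph G ω).ball v (k + 1) \ (openGraph G ω).ball v k ∧
    y ∉ (openGraph G ω).ball v (k + 1)}

variable {ω ω' σ : Sym2 V → Bool} {v u : V} {j k K m : ℕ}

theorem touchingEdges_mono {A B : Set V} (h : A ⊆ B) : touchingEdges G A ⊆ touchingEdges G B :=
  fun _ ⟨he, u, hu, hue⟩ => ⟨he, u, h hu, hue⟩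

theorem touchingEdges_finite (hlf : ∀ u : V, (G.neighborSet u).Finite) {A : Set V}
    (hA : A.Finite) : (touchingEdges G A).Finite := by
  refine (hA.biUnion fun u _ => ((hlf u).image fun w => s(u, w))).subset ?_
  rintro e ⟨he, u, hu, w, rfl⟩
  exact Set.mem_biUnion hu ⟨w, he, rfl⟩

theorem ball_openGraph_finite (hlf : ∀ u : V, (G.neighborSet u).Finite) (k : ℕ) :
    ((openGraph G ω).ball v k).Finite := by
  induction k with
  | zero => simp
  | succ k ih =>
    refine ((Set.finite_singleton v).union (ih.biUnion fun w _ => hlf w)).subset ?_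
    intro u hu
    push_cast at hu
    rcases SimpleGraph.mem_ball_succ_iff.mp hu with rfl | ⟨w, hw, hwu⟩
    · exact Or.inl rfl
    · exact Or.inr (Set.mem_biUnion hw hwu.1)

theorem ball_openGraph_eq_of_eqOn
    (h : ∀ e ∈ touchingEdges G ((openGraph G ω).ball v k), ω e = ω' e) :
    ∀ j ≤ k + 1, (openGraph G ω).ball v j = (openGraph G ω').ball v j := by
  intro j hj
  induction j with
  | zero => simp
  | succ j ih =>
    have hball := ih (by omega)
    have hadj : ∀ w ∈ (openGraph G ω).ball v j, ∀ u,
        (openGraph G ω).Adj w u ↔ (openGraph G ω').Adj w u := by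
      intro w hw u
      have hwk : w ∈ (openGraph G ω).ball v k :=
        SimpleGraph.ball_mono (by exact_mod_cast (by omega : j ≤ k)) hw
      by_cases hG : G.Adj w u
      · simp only [openGraph, hG, true_and]
        rw [h _ ⟨hG, w, hwk, Sym2.mem_mk_left w u⟩]
      · simp [openGraph, hG]
    ext u
    push_cast
    simp only [SimpleGraph.mem_ball_succ_iff, ← hball]
    exact or_congr_right (exists_congr fun w => and_congr_right fun hw => hadj w hw u)

theorem escapeEdges_subset_touchingEdges :
    escapeEdges G ω v k ⊆ touchingEdges G ((openGraph G ω).ball v (k + 1)) := by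
  rintro e ⟨he, x, y, rfl, hx, -⟩
  exact ⟨he, x, hx.1, Sym2.mem_mk_left x y⟩

theorem disjoint_touchingEdges_escapeEdges :
    Disjoint (touchingEdges G ((openGraph G ω).ball v k)) (escapeEdges G ω v k) := by
  rw [Set.disjoint_left]
  rintro e ⟨-, u, hu, hue⟩ ⟨-, x, y, rfl, hx, hy⟩
  rcases Sym2.mem_iff.mp hue with rfl | rfl
  · exact hx.2 hu
  · exact hy (SimpleGraph.ball_mono le_self_add hu)

theorem disjoint_escapeEdges (hjk : j < k) :
    Disjoint (escapeEdges G ω v j) (escapeEdges G ω v k) :=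
  disjoint_touchingEdges_escapeEdges.mono_left <| escapeEdges_subset_touchingEdges.trans <|
    touchingEdges_mono <| SimpleGraph.ball_mono (by exact_mod_cast hjk)

theorem pairwise_disjoint_escapeEdges : Pairwise (Disjoint on escapeEdges G ω v) :=
  fun _ _ h => h.lt_or_gt.elim disjoint_escapeEdges fun h => (disjoint_escapeEdges h).symm

theorem escapeEdges_subset_clusterEdges : escapeEdges G ω v k ⊆ clusterEdges G ω v := by
  rintro e ⟨he, x, y, rfl, hx, -⟩
  have hxv := SimpleGraph.reachable_of_edist_ne_top (hx.1.trans_le le_top).ne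
  exact ⟨he, x, hxv.symm, Sym2.mem_mk_left x y⟩

theorem sum_ncard_escapeEdges_le {n : ℕ} (h : (clusterEdges G ω v).encard ≤ n) (m : ℕ) :
    ∑ j ∈ Finset.range m, (escapeEdges G ω v j).ncard ≤ n := by
  have hunion := (Finset.range m).finite_toSet.encard_biUnion (s := escapeEdges G ω v)
    (pairwise_disjoint_escapeEdges.set_pairwise _)
  rw [finsum_mem_coe_finset] at hunion
  have hsub : (⋃ j ∈ (Finset.range m : Set ℕ), escapeEdges G ω v j) ⊆ clusterEdges G ω v :=
    Set.iUnion₂_subset fun _ _ => escapeEdges_subset_clusterEdges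
  have : ((∑ j ∈ Finset.range m, (escapeEdges G ω v j).ncard : ℕ) : ℕ∞) ≤ n := by
    push_cast
    calc ∑ j ∈ Finset.range m, ((escapeEdges G ω v j).ncard : ℕ∞)
        ≤ ∑ j ∈ Finset.range m, (escapeEdges G ω v j).encard :=
          Finset.sum_le_sum fun j _ => Set.ncard_le_encard _
      _ = (⋃ j ∈ (Finset.range m : Set ℕ), escapeEdges G ω v j).encard := hunion.symm
      _ ≤ n := (Set.encard_le_encard hsub).trans h
  exact_mod_cast this

theorem exists_open_escapeEdge (hu : (openGraph G ω).Reachable v u)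
    (hk : k < (openGraph G ω).dist v u) : ∃ e ∈ escapeEdges G ω v k, ω e = true := by
  have hnot : u ∉ (openGraph G ω).ball v (k + 1) := by
    rw [SimpleGraph.mem_ball, SimpleGraph.edist_comm, ← hu.coe_dist_eq_edist, not_lt]
    exact_mod_cast hk
  obtain ⟨x, y, hxy, hx, hy⟩ := hu.exists_adj_boundary_ball hnot
  exact ⟨s(x, y), ⟨hxy.1, x, y, rfl, hx, hy⟩, hxy.2⟩

def exploredCyl (G : SimpleGraph V) (v : V) (σ : Sym2 V → Bool) (k : ℕ) :
    Set (Sym2 V → Bool) :=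
  cyl (touchingEdges G ((openGraph G σ).ball v k)) σ

theorem ball_eq_of_mem_exploredCyl (hω : ω ∈ exploredCyl G v σ k) :
    ∀ j ≤ k + 1, (openGraph G ω).ball v j = (openGraph G σ).ball v j := fun j hj =>
  (ball_openGraph_eq_of_eqOn (fun e he => (hω e he).symm) j hj).symm

theorem escapeEdges_eq_of_mem_exploredCyl (hω : ω ∈ exploredCyl G v σ k) :
    escapeEdges G ω v k = escapeEdges G σ v k := by
  have h := ball_eq_of_mem_exploredCyl hω
  have hk := h k (by omega)
  have hk1 := h (k + 1) le_rfl
  push_cast at hk1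
  simp only [escapeEdges, hk, hk1]

noncomputable def thinLevels (G : SimpleGraph V) (ω : Sym2 V → Bool) (v : V) (K k m : ℕ) : ℕ :=
  ((Finset.Ico k m).filter fun j => (escapeEdges G ω v j).ncard ≤ K).card

theorem thinLevels_eq_add (hkm : k < m) :
    thinLevels G ω v K k m =
      (if (escapeEdges G ω v k).ncard ≤ K then 1 else 0) + thinLevels G ω v K (k + 1) m := by
  simp only [thinLevels, Finset.card_filter]
  exact Finset.sum_eq_sum_Ico_succ_bot hkm _

def crossingEvent (G : SimpleGraph V) (v : V) (K k m r : ℕ) : Set (Sym2 V → Bool) :=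
  {ω | (∀ j ∈ Finset.Ico k m, ∃ e ∈ escapeEdges G ω v j, ω e = true) ∧
    r ≤ thinLevels G ω v K k m}

theorem cyl_touchingEdges_succ_subset
    (hω : ω ∈ exploredCyl G v σ k ∩ {ω | ∃ e ∈ escapeEdges G σ v k, ω e = true}) :
    cyl (touchingEdges G ((openGraph G σ).ball v (k + 1))) ω ⊆
      exploredCyl G v σ k ∩ {ω | ∃ e ∈ escapeEdges G σ v k, ω e = true} := by
  obtain ⟨hωC, e, he, hωe⟩ := hω
  intro ω' hω'
  refine ⟨fun e' he' => ?_, e, he, (hω' e (escapeEdges_subset_touchingEdges he)).trans hωe⟩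
  rw [hω' e' (touchingEdges_mono (SimpleGraph.ball_mono le_self_add) he')]
  exact hωC e' he'

/-- None of the escape edges at level `k` has been examined by the exploration of the ball of
radius `k`, so they are still independent of it. -/
theorem measure_exploredCyl_inter_escape_le (hμ : IsBernoulli G p μ) (hp0 : 0 ≤ p)
    (hp1 : p ≤ 1) (hlf : ∀ u : V, (G.neighborSet u).Finite) (σ : Sym2 V → Bool) :
    μ (exploredCyl G v σ k ∩ {ω | ∃ e ∈ escapeEdges G σ v k, ω e = true}) ≤
      μ (exploredCyl G v σ k) * ENNReal.ofReal (1 - (1 - p) ^ K) ^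
        (if (escapeEdges G σ v k).ncard ≤ K then 1 else 0) := by
  by_cases hthin : (escapeEdges G σ v k).ncard ≤ K
  · have hS : (escapeEdges G σ v k).Finite :=
      (touchingEdges_finite hlf (ball_openGraph_finite hlf _)).subset
        escapeEdges_subset_touchingEdges
    refine (hμ.measure_cyl_inter_exists_open hp0 hp1
      (touchingEdges_finite hlf (ball_openGraph_finite hlf _)) hS
      (fun e he => he.1) (fun e he => he.1) disjoint_touchingEdges_escapeEdges σ).trans_le ?_
    have : (1 - p) ^ K ≤ (1 - p) ^ (escapeEdges G σ v k).ncard :=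
      pow_le_pow_of_le_one (by linarith) (by linarith) hthin
    rw [if_pos hthin, pow_one]
    exact mul_le_mul_of_nonneg_left (ENNReal.ofReal_le_ofReal (by linarith)) bot_le
  · rw [if_neg hthin, pow_zero, mul_one]
    exact measure_mono Set.inter_subset_left

theorem measure_exploredCyl_inter_crossingEvent_step (hμ : IsBernoulli G p μ) (hp0 : 0 ≤ p)
    (hp1 : p ≤ 1) (hlf : ∀ u : V, (G.neighborSet u).Finite) (hkm : k < m)
    (ih : ∀ r ω, μ (exploredCyl G v ω (k + 1) ∩ crossingEvent G v K (k + 1) m r) ≤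
      μ (exploredCyl G v ω (k + 1)) * ENNReal.ofReal (1 - (1 - p) ^ K) ^ r)
    (r : ℕ) (σ : Sym2 V → Bool) :
    μ (exploredCyl G v σ k ∩ crossingEvent G v K k m r) ≤
      μ (exploredCyl G v σ k) * ENNReal.ofReal (1 - (1 - p) ^ K) ^ r := by
  set q := ENNReal.ofReal (1 - (1 - p) ^ K)
  set C := exploredCyl G v σ k
  set A := C ∩ {ω | ∃ e ∈ escapeEdges G σ v k, ω e = true}
  set δ := if (escapeEdges G σ v k).ncard ≤ K then 1 else 0
  have hq1 : q ≤ 1 := ENNReal.ofReal_le_one.mpr (by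
    have : 0 ≤ (1 - p) ^ K := pow_nonneg (by linarith) K
    linarith)
  have hsub : C ∩ crossingEvent G v K k m r ⊆ A ∩ crossingEvent G v K (k + 1) m (r - δ) := by
    rintro ω ⟨hωC, hcross, hthin⟩
    have hS : escapeEdges G ω v k = escapeEdges G σ v k := escapeEdges_eq_of_mem_exploredCyl hωC
    refine ⟨⟨hωC, hS ▸ hcross k (by simp [hkm])⟩, fun j hj => hcross j ?_, ?_⟩
    · simp only [Finset.mem_Ico] at hj ⊢; omega
    · rw [thinLevels_eq_add hkm, hS] at hthin; omega
  have hB : ∀ ω ∈ A, μ (cyl (touchingEdges G ((openGraph G σ).ball v (k + 1))) ω ∩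
      crossingEvent G v K (k + 1) m (r - δ)) ≤
        μ (cyl (touchingEdges G ((openGraph G σ).ball v (k + 1))) ω) * q ^ (r - δ) := by
    intro ω hω
    have h := ih (r - δ) ω
    rwa [exploredCyl, ball_eq_of_mem_exploredCyl hω.1 (k + 1) le_rfl] at h
  calc μ (C ∩ crossingEvent G v K k m r)
      ≤ μ (A ∩ crossingEvent G v K (k + 1) m (r - δ)) := measure_mono hsub
    _ ≤ μ A * q ^ (r - δ) :=
        measure_inter_le_mul_of_cyl (touchingEdges_finite hlf (ball_openGraph_finite hlf _))
          (fun ω hω => cyl_touchingEdges_succ_subset hω) hB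
    _ ≤ μ C * q ^ δ * q ^ (r - δ) := by
        gcongr; exact measure_exploredCyl_inter_escape_le hμ hp0 hp1 hlf σ
    _ ≤ μ C * q ^ r := by
        rw [mul_assoc, ← pow_add]
        exact mul_le_mul_of_nonneg_left (pow_le_pow_of_le_one bot_le hq1 (by omega)) bot_le

theorem measure_exploredCyl_inter_crossingEvent_le (hμ : IsBernoulli G p μ) (hp0 : 0 ≤ p)
    (hp1 : p ≤ 1) (hlf : ∀ u : V, (G.neighborSet u).Finite) (hkm : k ≤ m)
    (r : ℕ) (σ : Sym2 V → Bool) :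
    μ (exploredCyl G v σ k ∩ crossingEvent G v K k m r) ≤
      μ (exploredCyl G v σ k) * ENNReal.ofReal (1 - (1 - p) ^ K) ^ r := by
  induction hkm using Nat.decreasingInduction generalizing r σ with
  | self =>
    rcases r with _ | r
    · simpa using measure_mono Set.inter_subset_left
    · have : crossingEvent G v K m m (r + 1) = ∅ := by
        ext ω; simp [crossingEvent, thinLevels]
      simp [this]
  | of_succ k hkm ih =>
    exact measure_exploredCyl_inter_crossingEvent_step hμ hp0 hp1 hlf hkm ih r σ

theorem exploredCyl_zero (σ : Sym2 V → Bool) : exploredCyl G v σ 0 = Set.univ := by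
  simp [exploredCyl, cyl, touchingEdges]

theorem radius_event_subset_crossingEvent (n : ℕ) :
    {ω | (∃ u : V, (openGraph G ω).Reachable v u ∧ m ≤ (openGraph G ω).dist v u) ∧
        (clusterEdges G ω v).encard ≤ (n : ℕ∞)} ⊆
      crossingEvent G v K 0 m (m - n / (K + 1)) := by
  rintro ω ⟨⟨u, hu, hmu⟩, hn⟩
  refine ⟨fun j hj => exists_open_escapeEdge hu ((Finset.mem_Ico.mp hj).2.trans_le hmu), ?_⟩
  have := (Finset.range m).card_sub_div_le_card_filter_le _ (sum_ncard_escapeEdges_le hn m) K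
  rwa [Finset.card_range, Finset.range_eq_Ico] at this

theorem one_sub_pow_pow_le_exp (hp0 : 0 ≤ p) (hp1 : p < 1) (n m : ℕ) :
    (1 - (1 - p) ^ (4 * n / m)) ^ (m - n / (4 * n / m + 1)) ≤
      Real.exp (-(1 / 2) * (1 - p) ^ ((4 * (n : ℝ)) / (m : ℝ)) * (m : ℝ)) := by
  set K := 4 * n / m
  set r := m - n / (K + 1)
  have hx1 : (1 - p) ^ K ≤ 1 := pow_le_one₀ (by linarith) (by linarith)
  have hy0 : 0 ≤ (1 - p) ^ ((4 * (n : ℝ)) / (m : ℝ)) := Real.rpow_nonneg (by linarith) _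
  have hyx : (1 - p) ^ ((4 * (n : ℝ)) / (m : ℝ)) ≤ (1 - p) ^ K := by
    rw [← Real.rpow_natCast]
    refine Real.rpow_le_rpow_of_exponent_ge (by linarith) (by linarith) ?_
    exact_mod_cast Nat.cast_div_le (α := ℝ) (m := 4 * n) (n := m)
  have hr : (m : ℝ) ≤ 2 * r := by exact_mod_cast Nat.le_two_mul_sub_div n m
  refine (Real.one_sub_pow_le_exp_neg_mul hx1 r).trans (Real.exp_le_exp.mpr ?_)
  nlinarith [mul_le_mul_of_nonneg_left hr hy0,
    mul_le_mul_of_nonneg_right hyx (Nat.cast_nonneg (α := ℝ) r)]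

theorem skinny_cluster_radius_general
    {V : Type*} (G : SimpleGraph V)
    (hlf : ∀ u : V, (G.neighborSet u).Finite) (v : V)
    (p : ℝ) (hp0 : 0 ≤ p) (hp1 : p < 1)
    (n m : ℕ)
    (μ : Measure (Sym2 V → Bool)) (hμ : IsBernoulli G p μ) :
    μ {ω | (∃ u : V, (openGraph G ω).Reachable v u ∧ m ≤ (openGraph G ω).dist v u) ∧
        (clusterEdges G ω v).encard ≤ (n : ℕ∞)} ≤
      ENNReal.ofReal
        (Real.exp (-(1 / 2) * (1 - p) ^ ((4 * (n : ℝ)) / (m : ℝ)) * (m : ℝ))) := by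
  have : IsProbabilityMeasure μ := hμ.1
  set K := 4 * n / m
  set σ : Sym2 V → Bool := fun _ => false
  calc _ ≤ μ (exploredCyl G v σ 0 ∩ crossingEvent G v K 0 m (m - n / (K + 1))) := by
        rw [exploredCyl_zero, Set.univ_inter]
        exact measure_mono (radius_event_subset_crossingEvent n)
    _ ≤ μ (exploredCyl G v σ 0) * ENNReal.ofReal (1 - (1 - p) ^ K) ^ (m - n / (K + 1)) :=
        measure_exploredCyl_inter_crossingEvent_le hμ hp0 hp1.le hlf m.zero_le _ σ
    _ = ENNReal.ofReal ((1 - (1 - p) ^ K) ^ (m - n / (K + 1))) := by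
        have : (1 - p) ^ K ≤ 1 := pow_le_one₀ (by linarith) (by linarith)
        rw [exploredCyl_zero, measure_univ, one_mul, ENNReal.ofReal_pow (by linarith)]
    _ ≤ _ := ENNReal.ofReal_le_ofReal (one_sub_pow_pow_le_exp hp0 hp1 n m)

/-- **Lemma 2.7.**  Let `G` be a locally finite graph and `v` a vertex.  Then
`P_p(R_v ≥ m and E_v ≤ n) ≤ exp (-(1/2) (1-p)^{4n/m} m)` for every `p ∈ [0,1)` and all
integers `n ≥ m ≥ 0`, where `R_v` is the intrinsic radius of the cluster of `v`. -/
theorem skinny_cluster_radius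
    {V : Type*} (G : SimpleGraph V)
    (hlf : ∀ u : V, (G.neighborSet u).Finite) (v : V)
    (p : ℝ) (hp0 : 0 ≤ p) (hp1 : p < 1)
    (n m : ℕ) (hmn : m ≤ n)
    (μ : Measure (Sym2 V → Bool)) (hμ : IsBernoulli G p μ) :
    μ {ω | (∃ u : V, (openGraph G ω).Reachable v u ∧ m ≤ (openGraph G ω).dist v u) ∧
        (clusterEdges G ω v).encard ≤ (n : ℕ∞)} ≤
      ENNReal.ofReal
        (Real.exp (-(1 / 2) * (1 - p) ^ ((4 * (n : ℝ)) / (m : ℝ)) * (m : ℝ))) :=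
  skinny_cluster_radius_general G hlf v p hp0 hp1 n m μ hμ

end Percolation
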